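/- For every graph G, cbn(G) − 1 ≤ wctw(G) ≤ ctw(G), where cbn(G) is the maximum connected order of a bramble of G, wctw(G) is the weak connected tree-width, and ctw(G) is the connected tree-width. -/

import Mathlib

open SimpleGraph

universe u

/-- `x` and `y` are joined by a walk in `G` all of whose vertices lie in `S`. -/
def ConnIn {V : Type u} (G : SimpleGraph V) (S : Set V) (x y : V) : Prop :=
  ∃ p : G.Walk x y, ∀ v ∈ p.support, v ∈ S

/-- `S` is a (nonempty) connected vertex set of `G`, i.e. `G[S]` is connected. -/
def IsConnSet {V : Type u} (G : SimpleGraph V) (S : Set V) : Prop :=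
  S.Nonempty ∧ ∀ x ∈ S, ∀ y ∈ S, ConnIn G S x y

/-- A tree-decomposition of `G` over the tree `T`. -/
structure TreeDecomp {V ι : Type u} (G : SimpleGraph V) (T : SimpleGraph ι) where
  isTree : T.IsTree
  bag : ι → Set V
  exists_bag : ∀ v : V, ∃ t, v ∈ bag t
  exists_bag_adj : ∀ ⦃u v : V⦄, G.Adj u v → ∃ t, u ∈ bag t ∧ v ∈ bag t
  bag_sep : ∀ ⦃t₁ t₃ : ι⦄ (p : T.Walk t₁ t₃), p.IsPath → ∀ t₂ ∈ p.support,
      bag t₁ ∩ bag t₃ ⊆ bag t₂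

/-- The union of the bags `B u` over `u ∈ A`. -/
def unionBags {V ι : Type u} (B : ι → Set V) (A : Set ι) : Set V := ⋃ u ∈ A, B u

/-- `s` is a descendant of `t` in the tree `T` rooted at `r`:
`t` lies on the (unique) `r`–`s` path. -/
def Desc {ι : Type u} (T : SimpleGraph ι) (r t s : ι) : Prop :=
  ∃ p : T.Walk r s, p.IsPath ∧ t ∈ p.support

/-- The set of descendants of `t` (the subtree `T_t`). -/
def descSet {ι : Type u} (T : SimpleGraph ι) (r t : ι) : Set ι := {s | Desc T r t s}

/-- `s` is a child of `t` in the tree `T` rooted at `r`. -/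
def IsChild {ι : Type u} (T : SimpleGraph ι) (r t s : ι) : Prop :=
  T.Adj t s ∧ Desc T r t s

/-- The vertex set of the component of `t₁` in `T` minus the edge `t₁t₂`. -/
def Side {ι : Type u} (T : SimpleGraph ι) (t₁ t₂ : ι) : Set ι :=
  {u | ∃ p : T.Walk u t₁, p.IsPath ∧ t₂ ∉ p.support}

/-- The family of bags `B` is stable: for every tree edge `t₁t₂`, both sides
induce connected subgraphs of `G`. -/
def StableBags {V ι : Type u} (G : SimpleGraph V) (T : SimpleGraph ι) (B : ι → Set V) : Prop :=
  ∀ ⦃t₁ t₂ : ι⦄, T.Adj t₁ t₂ → IsConnSet G (unionBags B (Side T t₁ t₂))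

def TreeDecomp.Stable {V ι : Type u} {G : SimpleGraph V} {T : SimpleGraph ι}
    (td : TreeDecomp G T) : Prop :=
  StableBags G T td.bag

/-- `P` is a `t`-admissible path (w.r.t. the root `r` and bags `B`): a shortest
path lying in `V_{T_t}` joining two distinct components of `G[B t]`. -/
structure IsAdmissible {V ι : Type u} (G : SimpleGraph V) (T : SimpleGraph ι)
    (B : ι → Set V) (r t : ι) {x y : V} (P : G.Walk x y) : Prop where
  isPath : P.IsPath
  support_sub : ∀ v ∈ P.support, v ∈ unionBags B (descSet T r t)
  fst_mem : x ∈ B t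
  snd_mem : y ∈ B t
  not_conn : ¬ ConnIn G (B t) x y
  minimal : ∀ ⦃x' y' : V⦄ (Q : G.Walk x' y'), Q.IsPath →
      (∀ v ∈ Q.support, v ∈ unionBags B (descSet T r t)) →
      x' ∈ B t → y' ∈ B t → ¬ ConnIn G (B t) x' y' → P.length ≤ Q.length

/-- The updated bags obtained by adding the path `P` as in `(*)`:
`W_u = V_u ∪ (V(P) ∩ V_{T_u})` for descendants `u` of `t`, and `W_u = V_u` otherwise. -/
def updatedBag {V ι : Type u} (T : SimpleGraph ι) (B : ι → Set V) (r t : ι)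
    {G : SimpleGraph V} {x y : V} (P : G.Walk x y) (u : ι) : Set V :=
  B u ∪ {v | Desc T r t u ∧ v ∈ P.support ∧ v ∈ unionBags B (descSet T r u)}

/-- The tree-width of `G`: the least `k` such that `G` has a tree-decomposition
all of whose bags have at most `k + 1` vertices. -/
noncomputable def treewidth {V : Type u} (G : SimpleGraph V) : ℕ :=
  sInf {k | ∃ (ι : Type u) (T : SimpleGraph ι) (td : TreeDecomp G T),
    ∀ t, (td.bag t).ncard ≤ k + 1}

/-- A tree-decomposition is connected if every bag is a connected vertex set. -/
def TreeDecomp.IsConn {V ι : Type u} {G : SimpleGraph V} {T : SimpleGraph ι}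
    (td : TreeDecomp G T) : Prop :=
  ∀ t, IsConnSet G (td.bag t)

/-- The connected tree-width of `G`. -/
noncomputable def ctw {V : Type u} (G : SimpleGraph V) : ℕ :=
  sInf {k | ∃ (ι : Type u) (T : SimpleGraph ι) (td : TreeDecomp G T),
    td.IsConn ∧ ∀ t, (td.bag t).ncard ≤ k + 1}

/-- The weak connected tree-width of `G`: the least `k` such that `G` has a
tree-decomposition each of whose bags is contained in a connected set of at
most `k + 1` vertices. -/
noncomputable def wctw {V : Type u} (G : SimpleGraph V) : ℕ :=
  sInf {k | ∃ (ι : Type u) (T : SimpleGraph ι) (td : TreeDecomp G T),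
    ∀ t, ∃ X, td.bag t ⊆ X ∧ IsConnSet G X ∧ X.ncard ≤ k + 1}

/-- The characteristic vector over GF(2) of the edge set of a walk. -/
noncomputable def walkChar {V : Type u} {G : SimpleGraph V} {x y : V}
    (p : G.Walk x y) : Sym2 V → ZMod 2 :=
  fun e => by classical exact if e ∈ p.edges then 1 else 0

/-- The characteristic vectors of the cycles of `G` of length at most `ℓ`. -/
def cycleChars {V : Type u} (G : SimpleGraph V) (ℓ : ℕ) : Set (Sym2 V → ZMod 2) :=
  {f | ∃ (v : V) (p : G.Walk v v), p.IsCycle ∧ p.length ≤ ℓ ∧ f = walkChar p}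

/-- The cycles of length at most `ℓ` generate the cycle space of `G` over GF(2). -/
def GeneratesLE {V : Type u} (G : SimpleGraph V) (ℓ : ℕ) : Prop :=
  ∀ ⦃v : V⦄ (p : G.Walk v v), p.IsCycle →
    walkChar p ∈ Submodule.span (ZMod 2) (cycleChars G ℓ)

/-- `ℓ(G)`: the least `ℓ` such that the cycles of length at most `ℓ`
generate the cycle space of `G`. -/
noncomputable def ellGraph {V : Type u} (G : SimpleGraph V) : ℕ :=
  sInf {ℓ | GeneratesLE G ℓ}

/-- `Γ` is a set of cycles of `G` generating its cycle space over GF(2). -/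
def GeneratesSet {V : Type u} (G : SimpleGraph V) (Γ : Set (Σ v : V, G.Walk v v)) : Prop :=
  (∀ c ∈ Γ, c.2.IsCycle) ∧
  ∀ ⦃v : V⦄ (p : G.Walk v v), p.IsCycle →
    walkChar p ∈ Submodule.span (ZMod 2) {f | ∃ c ∈ Γ, f = walkChar c.2}

/-- A bramble: a collection of connected vertex sets, any two of which have
connected union. -/
def IsBramble {V : Type u} (G : SimpleGraph V) (B : Set (Set V)) : Prop :=
  (∀ S ∈ B, IsConnSet G S) ∧ ∀ S ∈ B, ∀ S' ∈ B, IsConnSet G (S ∪ S')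

/-- `X` is a connected cover of the bramble `B`. -/
def IsConnCover {V : Type u} (G : SimpleGraph V) (B : Set (Set V)) (X : Set V) : Prop :=
  IsConnSet G X ∧ ∀ S ∈ B, (X ∩ S).Nonempty

/-- The connected order of a bramble: the least size of a connected cover. -/
noncomputable def connOrder {V : Type u} (G : SimpleGraph V) (B : Set (Set V)) : ℕ :=
  sInf {n | ∃ X, IsConnCover G B X ∧ X.ncard = n}

/-- The maximum connected order of a bramble of `G`. -/
noncomputable def cbn {V : Type u} (G : SimpleGraph V) : ℕ :=
  sSup {n | ∃ B, IsBramble G B ∧ connOrder G B = n}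

/-- A geodesic cycle: a cycle containing a shortest `G`-path between any two
of its vertices. -/
def IsGeodesicCycle {V : Type u} (G : SimpleGraph V) {v : V} (p : G.Walk v v) : Prop :=
  p.IsCycle ∧ ∀ x ∈ p.support, ∀ y ∈ p.support,
    ∃ q : G.Walk x y, q.length = G.dist x y ∧ ∀ e ∈ q.edges, e ∈ p.edges

/-- The graph obtained from `K_n` by subdividing every edge exactly `k` times:
the edge between `i < j` is replaced by the path
`i, ((i,j),0), ((i,j),1), …, ((i,j),k-1), j`. -/
def subK (n k : ℕ) : SimpleGraph (Fin n ⊕ ({p : Fin n × Fin n // p.1 < p.2} × Fin k)) :=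
  SimpleGraph.fromRel fun u v =>
    match u, v with
    | Sum.inl i, Sum.inl j => i < j ∧ k = 0
    | Sum.inl i, Sum.inr (e, c) =>
        (e.val.1 = i ∧ (c : ℕ) = 0) ∨ (e.val.2 = i ∧ (c : ℕ) = k - 1)
    | Sum.inr (e, c), Sum.inr (e', c') => e = e' ∧ (c' : ℕ) = (c : ℕ) + 1
    | _, _ => False

/-! Given a tree-decomposition and a bramble, the nodes whose bags meet a fixed element `S` of
the bramble form a subtree (as `S` is connected), and two such subtrees intersect (as the union
of two elements is connected). By the Helly property of subtrees some bag meets every element,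
so any connected set containing that bag is a connected cover: `cbn G ≤ wctw G + 1`.
A connected tree-decomposition is in particular a weak one, and one exists (the star over the
components of `G`), whence `wctw G ≤ ctw G`. -/

namespace SimpleGraph

variable {ι : Type*} {T : SimpleGraph ι}

/-- In a tree these are exactly the vertex sets of subtrees. -/
def IsPathClosed (T : SimpleGraph ι) (C : Set ι) : Prop :=
  ∀ a ∈ C, ∀ b ∈ C, ∀ p : T.Walk a b, p.IsPath → ∀ v ∈ p.support, v ∈ C

lemma isPathClosed_univ : T.IsPathClosed Set.univ :=
  fun _ _ _ _ _ _ _ _ => Set.mem_univ _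

lemma IsPathClosed.inter {C D : Set ι} (hC : T.IsPathClosed C) (hD : T.IsPathClosed D) :
    T.IsPathClosed (C ∩ D) :=
  fun a ha b hb p hp v hv => ⟨hC a ha.1 b hb.1 p hp v hv, hD a ha.2 b hb.2 p hp v hv⟩

lemma Walk.exists_split_at_first_mem {a b : ι} (p : T.Walk a b) {S : Set ι} (hb : b ∈ S) :
    ∃ (m : ι) (p₁ : T.Walk a m) (p₂ : T.Walk m b), p = p₁.append p₂ ∧ m ∈ S ∧
      ∀ v ∈ p₁.support, v ∈ S → v = m := by
  induction p with
  | nil => exact ⟨_, .nil, .nil, rfl, hb, by simp⟩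
  | @cons a _ _ h q ih =>
    by_cases ha : a ∈ S
    · exact ⟨a, .nil, .cons h q, rfl, ha, by simp⟩
    · obtain ⟨m, p₁, p₂, rfl, hm, hfirst⟩ := ih hb
      refine ⟨m, .cons h p₁, p₂, rfl, hm, ?_⟩
      intro v hv hvS
      rw [Walk.support_cons, List.mem_cons] at hv
      rcases hv with rfl | hv
      · exact absurd hvS ha
      · exact hfirst v hv hvS

lemma IsPathClosed.inter_inter_nonempty (hT : T.Preconnected) {A B C : Set ι}
    (hA : T.IsPathClosed A) (hB : T.IsPathClosed B) (hC : T.IsPathClosed C)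
    (hAB : (A ∩ B).Nonempty) (hBC : (B ∩ C).Nonempty) (hAC : (A ∩ C).Nonempty) :
    (A ∩ B ∩ C).Nonempty := by
  classical
  obtain ⟨a, haA, haB⟩ := hAB
  obtain ⟨b, hbB, hbC⟩ := hBC
  obtain ⟨c, hcA, hcC⟩ := hAC
  set p := (hT b a).some.bypass
  have hp : p.IsPath := (hT b a).some.bypass_isPath
  obtain ⟨m, p₁, p₂, hsplit, hmA, hfirst⟩ := p.exists_split_at_first_mem haA
  have hp₁ : p₁.IsPath := (hsplit ▸ hp).of_append_left
  have hmB : m ∈ B := hB b hbB a haB p hp m (by simp [hsplit])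
  set s := (hT m c).some.bypass
  have hs : s.IsPath := (hT m c).some.bypass_isPath
  have hsA : ∀ v ∈ s.support, v ∈ A := hA m hmA c hcA s hs
  -- `p₁` meets `A` only at its end `m`, and `s` stays in `A`, so `p₁ ++ s` is a `b`–`c` path.
  have hpath : (p₁.append s).IsPath := by
    have hm : m ∉ s.support.tail := by
      have := hs.support_nodup
      rw [← s.cons_tail_support, List.nodup_cons] at this
      exact this.1
    rw [Walk.isPath_def, Walk.support_append, List.nodup_append]
    refine ⟨hp₁.support_nodup, hs.support_nodup.sublist (List.tail_sublist _), ?_⟩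
    rintro v hv₁ _ hv₂ rfl
    exact hm (hfirst v hv₁ (hsA v (List.mem_of_mem_tail hv₂)) ▸ hv₂)
  exact ⟨m, ⟨hmA, hmB⟩, hC b hbC c hcC _ hpath m (by simp)⟩

/-- Relative to `A` so that the induction can replace `A` by `A ∩ C i`; the usual Helly property
is the case `A = univ`. -/
theorem IsPathClosed.helly {A : Set ι} (hA : T.IsPathClosed A) (hT : T.Preconnected)
    {κ : Type*} {s : Set κ} (hs : s.Finite) {C : κ → Set ι}
    (hC : ∀ i ∈ s, T.IsPathClosed (C i)) (hCC : ∀ i ∈ s, ∀ j ∈ s, (C i ∩ C j).Nonempty)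
    (hAne : A.Nonempty) (hAC : ∀ i ∈ s, (A ∩ C i).Nonempty) :
    ∃ t ∈ A, ∀ i ∈ s, t ∈ C i := by
  induction s, hs using Set.Finite.induction_on generalizing A with
  | empty => simpa [Set.Nonempty] using hAne
  | @insert i s _ _ ih =>
    simp only [Set.mem_insert_iff, forall_eq_or_imp] at hC hCC hAC ⊢
    obtain ⟨t, ⟨htA, hti⟩, hts⟩ := ih (hA.inter hC.1) hC.2
      (fun j hj k hk => (hCC.2 j hj).2 k hk) hAC.1 fun j hj =>
        hA.inter_inter_nonempty hT hC.1 (hC.2 j hj) hAC.1 (hCC.1.2 j hj) (hAC.2 j hj)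
    exact ⟨t, htA, hti, hts⟩

end SimpleGraph

section

variable {V : Type u}

namespace TreeDecomp

variable {ι : Type u} {G : SimpleGraph V} {T : SimpleGraph ι} (td : TreeDecomp G T)

lemma exists_walk_not_mem_support_of_mem {v : V} {a b u : ι} (ha : v ∈ td.bag a)
    (hb : v ∈ td.bag b) (hu : v ∉ td.bag u) : ∃ q : T.Walk a b, u ∉ q.support := by
  classical
  obtain ⟨q⟩ := td.isTree.connected.preconnected a b
  exact ⟨q.bypass, fun hq => hu (td.bag_sep _ q.bypass_isPath u hq ⟨ha, hb⟩)⟩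

lemma exists_walk_not_mem_support {u : ι} {v v' : V} (w : G.Walk v v')
    (hw : ∀ x ∈ w.support, x ∉ td.bag u) {a b : ι} (ha : v ∈ td.bag a) (hb : v' ∈ td.bag b) :
    ∃ q : T.Walk a b, u ∉ q.support := by
  induction w generalizing a with
  | nil => exact td.exists_walk_not_mem_support_of_mem ha hb (hw _ (by simp))
  | cons h w ih =>
    obtain ⟨e, hve, hxe⟩ := td.exists_bag_adj h
    obtain ⟨q₁, hq₁⟩ := td.exists_walk_not_mem_support_of_mem ha hve (hw _ (by simp))
    obtain ⟨q₂, hq₂⟩ := ih (fun x hx => hw x (by simp [hx])) hxe hb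
    exact ⟨q₁.append q₂, by simp [Walk.mem_support_append_iff, hq₁, hq₂]⟩

lemma isPathClosed_setOf_inter_nonempty {S : Set V} (hS : IsConnSet G S) :
    T.IsPathClosed {t | (td.bag t ∩ S).Nonempty} := by
  classical
  rintro a ⟨v, hva, hvS⟩ b ⟨v', hv'b, hv'S⟩ p hp u hu
  by_contra hbu
  obtain ⟨w, hw⟩ := hS.2 v hvS v' hv'S
  obtain ⟨q, hq⟩ :=
    td.exists_walk_not_mem_support w (fun x hx hxu => hbu ⟨x, hxu, hw x hx⟩) hva hv'b
  have hqp : q.bypass = p := (td.isTree.existsUnique_path a b).unique q.bypass_isPath hp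
  exact hq (q.support_bypass_subset_support (hqp ▸ hu))

lemma exists_bag_inter_nonempty_of_isConnSet_union {S S' : Set V} (hS : S.Nonempty)
    (hS' : S'.Nonempty) (h : IsConnSet G (S ∪ S')) :
    ∃ t, (td.bag t ∩ S).Nonempty ∧ (td.bag t ∩ S').Nonempty := by
  obtain ⟨v, hv⟩ := hS
  obtain ⟨v', hv'⟩ := hS'
  by_cases hv'S : v' ∈ S
  · obtain ⟨t, ht⟩ := td.exists_bag v'
    exact ⟨t, ⟨v', ht, hv'S⟩, ⟨v', ht, hv'⟩⟩
  obtain ⟨w, hw⟩ := h.2 v (.inl hv) v' (.inr hv')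
  obtain ⟨d, hd, hdS, hdS'⟩ := w.exists_boundary_dart S hv hv'S
  obtain ⟨t, ht, ht'⟩ := td.exists_bag_adj d.adj
  have hd' : d.snd ∈ S' := (hw _ (w.dart_snd_mem_support_of_mem_darts hd)).resolve_left hdS'
  exact ⟨t, ⟨_, ht, hdS⟩, ⟨_, ht', hd'⟩⟩

theorem exists_bag_inter_nonempty_of_isBramble [Finite V] {B : Set (Set V)}
    (hB : IsBramble G B) : ∃ t, ∀ S ∈ B, (td.bag t ∩ S).Nonempty := by
  have : Nonempty ι := td.isTree.connected.nonempty
  have hmeet : ∀ S ∈ B, ∀ S' ∈ B,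
      ({t | (td.bag t ∩ S).Nonempty} ∩ {t | (td.bag t ∩ S').Nonempty}).Nonempty :=
    fun S hS S' hS' => td.exists_bag_inter_nonempty_of_isConnSet_union (hB.1 S hS).1
      (hB.1 S' hS').1 (hB.2 S hS S' hS')
  obtain ⟨t, -, ht⟩ := isPathClosed_univ.helly td.isTree.connected.preconnected B.toFinite
    (fun S hS => td.isPathClosed_setOf_inter_nonempty (hB.1 S hS)) hmeet Set.univ_nonempty
    (fun S hS => by simpa using hmeet S hS S hS)
  exact ⟨t, ht⟩

lemma connOrder_le [Finite V] {B : Set (Set V)} (hB : IsBramble G B) {k : ℕ}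
    (hk : ∀ t, ∃ X, td.bag t ⊆ X ∧ IsConnSet G X ∧ X.ncard ≤ k + 1) :
    connOrder G B ≤ k + 1 := by
  obtain ⟨t, ht⟩ := td.exists_bag_inter_nonempty_of_isBramble hB
  obtain ⟨X, hbX, hX, hXk⟩ := hk t
  refine le_trans (Nat.sInf_le ⟨X, ⟨hX, fun S hS => ?_⟩, rfl⟩) hXk
  exact (ht S hS).mono (Set.inter_subset_inter_left S hbX)

end TreeDecomp

lemma SimpleGraph.ConnectedComponent.isConnSet_supp {G : SimpleGraph V}
    (c : G.ConnectedComponent) : IsConnSet G c.supp := by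
  classical
  refine ⟨c.nonempty_supp, fun x hx y hy => ?_⟩
  rw [ConnectedComponent.mem_supp_iff] at hx hy
  obtain ⟨w⟩ := ConnectedComponent.exact (hx.trans hy.symm)
  refine ⟨w, fun z hz => ?_⟩
  rw [ConnectedComponent.mem_supp_iff, ← hx]
  exact (ConnectedComponent.sound (w.takeUntil z hz).reachable).symm

def componentStarDecomp (G : SimpleGraph V) (c₀ : G.ConnectedComponent) :
    TreeDecomp G (starGraph c₀) where
  isTree := isTree_starGraph c₀
  bag c := c.supp
  exists_bag v := ⟨G.connectedComponentMk v, rfl⟩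
  exists_bag_adj _ _ h := ⟨_, rfl, (ConnectedComponent.sound h.reachable).symm⟩
  bag_sep t₁ t₃ p hp t₂ ht₂ v hv := by
    obtain rfl : t₁ = t₃ := hv.1.symm.trans hv.2
    obtain rfl := (Walk.isPath_iff_nil.mp hp).eq_nil
    rw [Walk.support_nil, List.mem_singleton] at ht₂
    exact ht₂ ▸ hv.1

lemma exists_isConn_treeDecomp_ncard_le_ctw [Finite V] [Nonempty V] (G : SimpleGraph V) :
    ∃ (ι : Type u) (T : SimpleGraph ι) (td : TreeDecomp G T),
      td.IsConn ∧ ∀ t, (td.bag t).ncard ≤ ctw G + 1 := by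
  have hne : {k | ∃ (ι : Type u) (T : SimpleGraph ι) (td : TreeDecomp G T),
      td.IsConn ∧ ∀ t, (td.bag t).ncard ≤ k + 1}.Nonempty :=
    ⟨Nat.card V, _, _, componentStarDecomp G (G.connectedComponentMk (Classical.arbitrary V)),
      fun c => c.isConnSet_supp, fun c => (Set.ncard_le_card _).trans (Nat.le_succ _)⟩
  exact Nat.sInf_mem hne

lemma wctw_eq_zero_of_isEmpty [IsEmpty V] (G : SimpleGraph V) : wctw G = 0 := by
  refine Nat.sInf_eq_zero.mpr (.inr (Set.eq_empty_of_forall_notMem ?_))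
  rintro k ⟨ι, T, td, h⟩
  have : Nonempty ι := td.isTree.connected.nonempty
  obtain ⟨X, -, hX, -⟩ := h (Classical.arbitrary _)
  exact IsEmpty.false hX.1.some

lemma connOrder_eq_zero_of_isEmpty [IsEmpty V] (G : SimpleGraph V) (B : Set (Set V)) :
    connOrder G B = 0 :=
  Nat.sInf_eq_zero.mpr (.inr (Set.eq_empty_of_forall_notMem
    fun _ ⟨_, hX, _⟩ => IsEmpty.false hX.1.1.some))

lemma wctw_le_ctw [Finite V] (G : SimpleGraph V) : wctw G ≤ ctw G := by
  rcases isEmpty_or_nonempty V with _ | _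
  · exact (wctw_eq_zero_of_isEmpty G).trans_le (Nat.zero_le _)
  obtain ⟨ι, T, td, hconn, hcard⟩ := exists_isConn_treeDecomp_ncard_le_ctw G
  exact Nat.sInf_le ⟨ι, T, td, fun t => ⟨td.bag t, subset_rfl, hconn t, hcard t⟩⟩

lemma exists_treeDecomp_subset_isConnSet_ncard_le_wctw [Finite V] [Nonempty V]
    (G : SimpleGraph V) : ∃ (ι : Type u) (T : SimpleGraph ι) (td : TreeDecomp G T),
      ∀ t, ∃ X, td.bag t ⊆ X ∧ IsConnSet G X ∧ X.ncard ≤ wctw G + 1 := by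
  obtain ⟨ι, T, td, hconn, hcard⟩ := exists_isConn_treeDecomp_ncard_le_ctw G
  have hne : {k | ∃ (ι : Type u) (T : SimpleGraph ι) (td : TreeDecomp G T),
      ∀ t, ∃ X, td.bag t ⊆ X ∧ IsConnSet G X ∧ X.ncard ≤ k + 1}.Nonempty :=
    ⟨ctw G, ι, T, td, fun t => ⟨td.bag t, subset_rfl, hconn t, hcard t⟩⟩
  exact Nat.sInf_mem hne

lemma connOrder_le_wctw_add_one [Finite V] {G : SimpleGraph V} {B : Set (Set V)}
    (hB : IsBramble G B) : connOrder G B ≤ wctw G + 1 := by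
  rcases isEmpty_or_nonempty V with _ | _
  · exact (connOrder_eq_zero_of_isEmpty G B).trans_le (Nat.zero_le _)
  obtain ⟨ι, T, td, hwctw⟩ := exists_treeDecomp_subset_isConnSet_ncard_le_wctw G
  exact td.connOrder_le hB hwctw

lemma cbn_le_wctw_add_one [Finite V] (G : SimpleGraph V) : cbn G ≤ wctw G + 1 :=
  csSup_le' fun _ ⟨_, hB, hn⟩ => hn ▸ connOrder_le_wctw_add_one hB

end

/-- for every graph, `cbn(G) − 1 ≤ wctw(G) ≤ ctw(G)`. -/
theorem cbn_wctw_ctw {V : Type u} [Finite V] (G : SimpleGraph V) :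
    cbn G - 1 ≤ wctw G ∧ wctw G ≤ ctw G :=
  ⟨tsub_le_iff_right.mpr (cbn_le_wctw_add_one G), wctw_le_ctw G⟩
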